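/- arXiv:2111.15396 — 2 statements merged into one kernel-verified Lean document; each statement's English description precedes it below -/
import Mathlib

section
/- Let κ₁, κ₂, κ₃ > 0, M ≥ 0, w ≥ 0, and set D := κ₂ + κ₃ + κ₁w², a := −(2κ₁w² + 2κ₂ + κ₃)/D, p := M(κ₂(2+a) + κ₃(1+a)), d := a², and c := (2κ₁w² − 2κ₂ − κ₃/2 + a·(2κ₁w² + (M−1)(2κ₂ + κ₃) − p) + (κ₁w² + M(κ₂ + κ₃))·d)/D. Then: (i) p = −Mκ₁κ₃w²/D; (ii) a·(2κ₁w² + 2κ₂ + κ₃) + D·d = 0; and (iii) M·((2κ₂ + κ₃/2) + (2κ₂ + κ₃)·a + (κ₂ + κ₃)·c) = (κ₁²w⁴ + 2κ₁κ₂w² + (κ₂ + κ₃)²)·Mκ₁κ₃w² / (2D³). -/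
/-- Diffusion-coefficient computation in the CLT for the simplified Hill dynamics:
with `D = κ₂ + κ₃ + κ₁w²`, `a = −(2κ₁w² + 2κ₂ + κ₃)/D`, `p = M(κ₂(2+a) + κ₃(1+a))`,
`d = a²` and
`c = (2κ₁w² − 2κ₂ − κ₃/2 + a(2κ₁w² + (M−1)(2κ₂+κ₃) − p) + (κ₁w² + M(κ₂+κ₃))d)/D`,
one has (i) `p = −Mκ₁κ₃w²/D`, (ii) `a(2κ₁w² + 2κ₂ + κ₃) + Dd = 0`, and
(iii) `M((2κ₂ + κ₃/2) + (2κ₂+κ₃)a + (κ₂+κ₃)c)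
        = (κ₁²w⁴ + 2κ₁κ₂w² + (κ₂+κ₃)²)Mκ₁κ₃w²/(2D³)`. -/
theorem simplified_hill_CLT_diffusion
    (κ₁ κ₂ κ₃ M w D a p d c : ℝ)
    (h₁ : 0 < κ₁) (h₂ : 0 < κ₂) (h₃ : 0 < κ₃) (hM : 0 ≤ M) (hw : 0 ≤ w)
    (hD : D = κ₂ + κ₃ + κ₁ * w ^ 2)
    (ha : a = -(2 * κ₁ * w ^ 2 + 2 * κ₂ + κ₃) / D)
    (hp : p = M * (κ₂ * (2 + a) + κ₃ * (1 + a)))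
    (hd : d = a ^ 2)
    (hc : c = (2 * κ₁ * w ^ 2 - 2 * κ₂ - κ₃ / 2
        + a * (2 * κ₁ * w ^ 2 + (M - 1) * (2 * κ₂ + κ₃) - p)
        + (κ₁ * w ^ 2 + M * (κ₂ + κ₃)) * d) / D) :
    p = -(M * κ₁ * κ₃ * w ^ 2) / D ∧
    a * (2 * κ₁ * w ^ 2 + 2 * κ₂ + κ₃) + D * d = 0 ∧
    M * ((2 * κ₂ + κ₃ / 2) + (2 * κ₂ + κ₃) * a + (κ₂ + κ₃) * c)
      = (κ₁ ^ 2 * w ^ 4 + 2 * κ₁ * κ₂ * w ^ 2 + (κ₂ + κ₃) ^ 2)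
          * (M * κ₁ * κ₃ * w ^ 2) / (2 * D ^ 3) := by
  have hD0 : D ≠ 0 := by
    have : 0 < D := by
      rw [hD]; positivity
    exact this.ne'
  subst hd hp ha hc hD
  refine ⟨by field_simp; ring, by field_simp; ring, ?_⟩
  field_simp
  ring
end

section
/- Let κ₁, ..., κ₈ > 0 and v₁, v₃ ≥ 0. For N ≥ 1 consider the linear system in (a₁, a₂): (i) −v₁(κ₁ + κ₂) + κ₈v₃ + κ₁v₁(a₂ − a₁) − κ₂v₁a₁ − Nκ₆a₁ − Nκ₇a₂ = 0, (ii) κ₃ + (κ₃ + N²κ₄)(a₁ − a₂) − N²κ₅a₂ − Nκ₆a₁ − Nκ₇a₂ = 0, and the linear system in (a₃, a₄): (iii) −Nκ₆ − κ₈v₃ + κ₁v₁(a₄ − a₃) − κ₂v₁a₃ − Nκ₆a₃ − Nκ₇a₄ = 0, (iv) −Nκ₆ + (κ₃ + N²κ₄)(a₃ − a₄) − N²κ₅a₄ − Nκ₆a₃ − Nκ₇a₄ = 0. Then for all sufficiently large N both systems have unique solutions (a₁ᴺ, a₂ᴺ) and (a₃ᴺ, a₄ᴺ), and, with λ₁ :=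 κ₁κ₄(κ₆ + κ₇)/(κ₄(κ₆ + κ₇) + κ₅κ₆) + κ₂κ₄κ₇/(κ₄(κ₆ + κ₇) + κ₅κ₆) and λ₂ := κ₁κ₅κ₆/(κ₄(κ₆ + κ₇) + κ₅κ₆) + κ₂(κ₄ + κ₅)κ₆/(κ₄(κ₆ + κ₇) + κ₅κ₆), one has lim_{N→∞} N(κ₆a₁ᴺ + κ₇a₂ᴺ) = −(λ₁ + λ₂)v₁ + κ₈v₃ and lim_{N→∞} N(κ₆(1 + a₃ᴺ) + κ₇a₄ᴺ) = λ₂v₁ − κ₈v₃. -/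
/-!
Both systems have the same coefficient matrix, and its determinant is a cubic in `N` with leading
coefficient `c = κ₄(κ₆ + κ₇) + κ₅κ₆ > 0`. So for large `N` Cramer's rule gives the unique solutions,
and when the inhomogeneous terms `p`, `s` are affine in `N` both components are ratios of cubics,
converging to `(κ₄ + κ₅)p₁/c` and `κ₄p₁/c`, where `p₁` is the slope of `p`. The first equation of
each system expresses `N(κ₆a₁ + κ₇a₂) - p` as `κ₁v₁(a₂ - a₁) - κ₂v₁a₁`, so the drifts converge too.
The identity `λ₁ + λ₂ = κ₁ + κ₂` then identifies the first limit.
-/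

open Filter Polynomial Topology

theorem Polynomial.div_tendsto_atTop_coeff_div_leadingCoeff_of_natDegree_le {𝕜 : Type*}
    [NormedField 𝕜] [LinearOrder 𝕜] [IsStrictOrderedRing 𝕜] [OrderTopology 𝕜] {P Q : 𝕜[X]}
    {n : ℕ} (hP : P.natDegree ≤ n) (hQ : Q.degree = n) :
    Tendsto (fun x => P.eval x / Q.eval x) atTop (𝓝 (P.coeff n / Q.leadingCoeff)) := by
  rcases (degree_le_of_natDegree_le hP).lt_or_eq with hlt | heq
  · rw [coeff_eq_zero_of_degree_lt hlt, zero_div]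
    exact div_tendsto_atTop_zero_of_degree_lt P Q (hQ ▸ hlt)
  · rw [← natDegree_eq_of_degree_eq_some heq]
    exact div_tendsto_atTop_leadingCoeff_div_of_degree_eq P Q (heq.trans hQ.symm)

theorem tendsto_cubic_div_cubic_atTop {𝕜 : Type*} [NormedField 𝕜] [LinearOrder 𝕜]
    [IsStrictOrderedRing 𝕜] [OrderTopology 𝕜] {c₃ : 𝕜} (hc : c₃ ≠ 0) (e₃ e₂ e₁ e₀ c₂ c₁ c₀ : 𝕜) :
    Tendsto (fun x => (e₃ * x ^ 3 + e₂ * x ^ 2 + e₁ * x + e₀) /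
      (c₃ * x ^ 3 + c₂ * x ^ 2 + c₁ * x + c₀)) atTop (𝓝 (e₃ / c₃)) := by
  have h := div_tendsto_atTop_coeff_div_leadingCoeff_of_natDegree_le
    (P := C e₃ * X ^ 3 + C e₂ * X ^ 2 + C e₁ * X + C e₀) natDegree_cubic_le
    (degree_cubic (b := c₂) (c := c₁) (d := c₀) hc)
  simpa [leadingCoeff_cubic hc, coeff_X, coeff_C] using h

theorem eventually_atTop_cubic_ne_zero {𝕜 : Type*} [NormedField 𝕜] [LinearOrder 𝕜]
    [IsStrictOrderedRing 𝕜] {c₃ : 𝕜} (hc : c₃ ≠ 0) (c₂ c₁ c₀ : 𝕜) :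
    ∀ᶠ x in atTop, c₃ * x ^ 3 + c₂ * x ^ 2 + c₁ * x + c₀ ≠ 0 := by
  have hP := ne_zero_of_coe_le_degree (degree_cubic (b := c₂) (c := c₁) (d := c₀) hc).ge
  simpa using eventually_atTop_not_isRoot _ hP

theorem linear_eq_pair_iff {K : Type*} [Field K] {p q r s t u : K} (hd : q * u - r * t ≠ 0)
    (b₁ b₂ : K) :
    (p + q * b₁ + r * b₂ = 0 ∧ s + t * b₁ + u * b₂ = 0) ↔
      (b₁ = (r * s - u * p) / (q * u - r * t) ∧ b₂ = (t * p - q * s) / (q * u - r * t)) := by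
  constructor
  · rintro ⟨h₁, h₂⟩
    rw [eq_div_iff hd, eq_div_iff hd]
    exact ⟨by linear_combination u * h₁ - r * h₂, by linear_combination q * h₂ - t * h₁⟩
  · rintro ⟨h₁, h₂⟩
    rw [eq_div_iff hd] at h₁ h₂
    refine ⟨mul_right_cancel₀ hd ?_, mul_right_cancel₀ hd ?_⟩
    · linear_combination q * h₁ + r * h₂
    · linear_combination t * h₁ + u * h₂

namespace CappellettiWiuf

variable (κ₁ κ₂ κ₃ κ₄ κ₅ κ₆ κ₇ v₁ : ℝ)

/-- Both systems read `p + q b₁ + r b₂ = 0`, `s + t b₁ + u b₂ = 0` with `q = -(κ₁ + κ₂)v₁ - Nκ₆`,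
`r = κ₁v₁ - Nκ₇`, `t = κ₃ + N²κ₄ - Nκ₆`, `u = -(κ₃ + N²(κ₄ + κ₅) + Nκ₇)`, and differ only in `p`
and `s`. This is `q u - r t` expanded in powers of `N`; `sol₁` and `sol₂` are Cramer's rule
`(r s - u p) / (q u - r t)` and `(t p - q s) / (q u - r t)`. -/
def det (N : ℝ) : ℝ :=
  (κ₄ * (κ₆ + κ₇) + κ₅ * κ₆) * N ^ 3 + (κ₁ * κ₅ + κ₂ * (κ₄ + κ₅)) * v₁ * N ^ 2
    + ((κ₁ + κ₂) * κ₇ * v₁ + κ₁ * κ₆ * v₁ + κ₃ * (κ₆ + κ₇)) * N + κ₂ * κ₃ * v₁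

noncomputable def sol₁ (p s N : ℝ) : ℝ :=
  ((κ₁ * v₁ - N * κ₇) * s + (κ₃ + N ^ 2 * (κ₄ + κ₅) + N * κ₇) * p) /
    det κ₁ κ₂ κ₃ κ₄ κ₅ κ₆ κ₇ v₁ N

noncomputable def sol₂ (p s N : ℝ) : ℝ :=
  ((κ₃ + N ^ 2 * κ₄ - N * κ₆) * p + ((κ₁ + κ₂) * v₁ + N * κ₆) * s) /
    det κ₁ κ₂ κ₃ κ₄ κ₅ κ₆ κ₇ v₁ N

theorem system_iff {N : ℝ} (hN : det κ₁ κ₂ κ₃ κ₄ κ₅ κ₆ κ₇ v₁ N ≠ 0) (p s b₁ b₂ : ℝ) :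
    (p + κ₁ * v₁ * (b₂ - b₁) - κ₂ * v₁ * b₁ - N * κ₆ * b₁ - N * κ₇ * b₂ = 0 ∧
      s + (κ₃ + N ^ 2 * κ₄) * (b₁ - b₂) - N ^ 2 * κ₅ * b₂ - N * κ₆ * b₁ - N * κ₇ * b₂ = 0) ↔
      b₁ = sol₁ κ₁ κ₂ κ₃ κ₄ κ₅ κ₆ κ₇ v₁ p s N ∧ b₂ = sol₂ κ₁ κ₂ κ₃ κ₄ κ₅ κ₆ κ₇ v₁ p s N := by
  have hdet : (-((κ₁ + κ₂) * v₁) - N * κ₆) * -(κ₃ + N ^ 2 * (κ₄ + κ₅) + N * κ₇)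
      - (κ₁ * v₁ - N * κ₇) * (κ₃ + N ^ 2 * κ₄ - N * κ₆) = det κ₁ κ₂ κ₃ κ₄ κ₅ κ₆ κ₇ v₁ N := by
    rw [det]; ring
  have key := linear_eq_pair_iff (p := p) (s := s) (hdet ▸ hN) b₁ b₂
  rw [hdet] at key
  convert key using 3
  · ring
  · ring
  · rw [sol₁]; ring
  · rw [sol₂]; ring

theorem eventually_det_ne_zero (hC : κ₄ * (κ₆ + κ₇) + κ₅ * κ₆ ≠ 0) :
    ∀ᶠ N : ℕ in atTop, det κ₁ κ₂ κ₃ κ₄ κ₅ κ₆ κ₇ v₁ N ≠ 0 :=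
  tendsto_natCast_atTop_atTop.eventually (eventually_atTop_cubic_ne_zero hC _ _ _)

theorem tendsto_div_det (hC : κ₄ * (κ₆ + κ₇) + κ₅ * κ₆ ≠ 0) (e₃ e₂ e₁ e₀ : ℝ) :
    Tendsto (fun N : ℕ => (e₃ * N ^ 3 + e₂ * N ^ 2 + e₁ * N + e₀) / det κ₁ κ₂ κ₃ κ₄ κ₅ κ₆ κ₇ v₁ N)
      atTop (𝓝 (e₃ / (κ₄ * (κ₆ + κ₇) + κ₅ * κ₆))) :=
  (tendsto_cubic_div_cubic_atTop hC _ _ _ _ _ _ _).comp tendsto_natCast_atTop_atTop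

variable {p s : ℕ → ℝ} {p₀ p₁ s₀ s₁ : ℝ}

theorem tendsto_sol₁ (hC : κ₄ * (κ₆ + κ₇) + κ₅ * κ₆ ≠ 0) (hp : ∀ N : ℕ, p N = p₀ + p₁ * N)
    (hs : ∀ N : ℕ, s N = s₀ + s₁ * N) :
    Tendsto (fun N : ℕ => sol₁ κ₁ κ₂ κ₃ κ₄ κ₅ κ₆ κ₇ v₁ (p N) (s N) N) atTop
      (𝓝 ((κ₄ + κ₅) * p₁ / (κ₄ * (κ₆ + κ₇) + κ₅ * κ₆))) := by
  refine (tendsto_div_det κ₁ κ₂ κ₃ κ₄ κ₅ κ₆ κ₇ v₁ hC _ ((κ₄ + κ₅) * p₀ + κ₇ * (p₁ - s₁))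
    (κ₁ * v₁ * s₁ + κ₃ * p₁ + κ₇ * (p₀ - s₀)) (κ₁ * v₁ * s₀ + κ₃ * p₀)).congr fun N => ?_
  rw [sol₁, hp, hs]
  ring

theorem tendsto_sol₂ (hC : κ₄ * (κ₆ + κ₇) + κ₅ * κ₆ ≠ 0) (hp : ∀ N : ℕ, p N = p₀ + p₁ * N)
    (hs : ∀ N : ℕ, s N = s₀ + s₁ * N) :
    Tendsto (fun N : ℕ => sol₂ κ₁ κ₂ κ₃ κ₄ κ₅ κ₆ κ₇ v₁ (p N) (s N) N) atTop
      (𝓝 (κ₄ * p₁ / (κ₄ * (κ₆ + κ₇) + κ₅ * κ₆))) := by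
  refine (tendsto_div_det κ₁ κ₂ κ₃ κ₄ κ₅ κ₆ κ₇ v₁ hC _ (κ₄ * p₀ + κ₆ * (s₁ - p₁))
    (κ₃ * p₁ + (κ₁ + κ₂) * v₁ * s₁ + κ₆ * (s₀ - p₀)) (κ₃ * p₀ + (κ₁ + κ₂) * v₁ * s₀)).congr
    fun N => ?_
  rw [sol₂, hp, hs]
  ring

theorem tendsto_drift (hC : κ₄ * (κ₆ + κ₇) + κ₅ * κ₆ ≠ 0) (hp : ∀ N : ℕ, p N = p₀ + p₁ * N)
    (hs : ∀ N : ℕ, s N = s₀ + s₁ * N) :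
    Tendsto (fun N : ℕ => N * (κ₆ * sol₁ κ₁ κ₂ κ₃ κ₄ κ₅ κ₆ κ₇ v₁ (p N) (s N) N
        + κ₇ * sol₂ κ₁ κ₂ κ₃ κ₄ κ₅ κ₆ κ₇ v₁ (p N) (s N) N) - p N) atTop
      (𝓝 (-((κ₁ * κ₅ + κ₂ * (κ₄ + κ₅)) * v₁ * p₁) / (κ₄ * (κ₆ + κ₇) + κ₅ * κ₆))) := by
  have h₁ := tendsto_sol₁ κ₁ κ₂ κ₃ κ₄ κ₅ κ₆ κ₇ v₁ hC hp hs
  have h₂ := tendsto_sol₂ κ₁ κ₂ κ₃ κ₄ κ₅ κ₆ κ₇ v₁ hC hp hs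
  convert (((h₂.sub h₁).const_mul (κ₁ * v₁)).sub (h₁.const_mul (κ₂ * v₁))).congr' ?_ using 2
  · ring
  · filter_upwards [eventually_det_ne_zero κ₁ κ₂ κ₃ κ₄ κ₅ κ₆ κ₇ v₁ hC] with N hN
    linear_combination ((system_iff _ _ _ _ _ _ _ _ hN (p N) (s N) _ _).mpr ⟨rfl, rfl⟩).1

end CappellettiWiuf

open CappellettiWiuf

theorem cappelletti_wiuf_averaging_general
    (κ₁ κ₂ κ₃ κ₄ κ₅ κ₆ κ₇ κ₈ : ℝ)
    (h₄ : 0 < κ₄) (h₅ : 0 < κ₅)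
    (h₆ : 0 < κ₆) (h₇ : 0 < κ₇)
    (v₁ v₃ : ℝ)
    (lam₁ lam₂ : ℝ)
    (hlam₁ : lam₁ = κ₁ * (κ₄ * (κ₆ + κ₇)) / (κ₄ * (κ₆ + κ₇) + κ₅ * κ₆)
        + κ₂ * (κ₄ * κ₇) / (κ₄ * (κ₆ + κ₇) + κ₅ * κ₆))
    (hlam₂ : lam₂ = κ₁ * (κ₅ * κ₆) / (κ₄ * (κ₆ + κ₇) + κ₅ * κ₆)
        + κ₂ * ((κ₄ + κ₅) * κ₆) / (κ₄ * (κ₆ + κ₇) + κ₅ * κ₆)) :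
    ∃ (a₁ a₂ a₃ a₄ : ℕ → ℝ) (N₀ : ℕ), 1 ≤ N₀ ∧
      (∀ N : ℕ, N₀ ≤ N →
        (∀ b₁ b₂ : ℝ,
          (-(v₁ * (κ₁ + κ₂)) + κ₈ * v₃ + κ₁ * v₁ * (b₂ - b₁) - κ₂ * v₁ * b₁
              - (N : ℝ) * κ₆ * b₁ - (N : ℝ) * κ₇ * b₂ = 0 ∧
           κ₃ + (κ₃ + (N : ℝ) ^ 2 * κ₄) * (b₁ - b₂) - (N : ℝ) ^ 2 * κ₅ * b₂
              - (N : ℝ) * κ₆ * b₁ - (N : ℝ) * κ₇ * b₂ = 0)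
          ↔ (b₁ = a₁ N ∧ b₂ = a₂ N)) ∧
        (∀ b₃ b₄ : ℝ,
          (-((N : ℝ) * κ₆) - κ₈ * v₃ + κ₁ * v₁ * (b₄ - b₃) - κ₂ * v₁ * b₃
              - (N : ℝ) * κ₆ * b₃ - (N : ℝ) * κ₇ * b₄ = 0 ∧
           -((N : ℝ) * κ₆) + (κ₃ + (N : ℝ) ^ 2 * κ₄) * (b₃ - b₄)
              - (N : ℝ) ^ 2 * κ₅ * b₄
              - (N : ℝ) * κ₆ * b₃ - (N : ℝ) * κ₇ * b₄ = 0)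
          ↔ (b₃ = a₃ N ∧ b₄ = a₄ N))) ∧
      Tendsto (fun N : ℕ => (N : ℝ) * (κ₆ * a₁ N + κ₇ * a₂ N)) atTop
        (nhds (-(lam₁ + lam₂) * v₁ + κ₈ * v₃)) ∧
      Tendsto (fun N : ℕ => (N : ℝ) * (κ₆ * (1 + a₃ N) + κ₇ * a₄ N)) atTop
        (nhds (lam₂ * v₁ - κ₈ * v₃)) := by
  have hC : κ₄ * (κ₆ + κ₇) + κ₅ * κ₆ ≠ 0 := by positivity
  have hlam : lam₁ + lam₂ = κ₁ + κ₂ := by rw [hlam₁, hlam₂]; field_simp; ring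
  set P := -(v₁ * (κ₁ + κ₂)) + κ₈ * v₃
  obtain ⟨N₀, hN₀⟩ := eventually_atTop.1
    ((eventually_det_ne_zero κ₁ κ₂ κ₃ κ₄ κ₅ κ₆ κ₇ v₁ hC).and (eventually_ge_atTop 1))
  refine ⟨fun N => sol₁ κ₁ κ₂ κ₃ κ₄ κ₅ κ₆ κ₇ v₁ P κ₃ N,
    fun N => sol₂ κ₁ κ₂ κ₃ κ₄ κ₅ κ₆ κ₇ v₁ P κ₃ N,
    fun N => sol₁ κ₁ κ₂ κ₃ κ₄ κ₅ κ₆ κ₇ v₁ (-(N * κ₆) - κ₈ * v₃) (-(N * κ₆)) N,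
    fun N => sol₂ κ₁ κ₂ κ₃ κ₄ κ₅ κ₆ κ₇ v₁ (-(N * κ₆) - κ₈ * v₃) (-(N * κ₆)) N,
    N₀, (hN₀ N₀ le_rfl).2,
    fun N hN => ⟨system_iff _ _ _ _ _ _ _ _ (hN₀ N hN).1 _ _,
      system_iff _ _ _ _ _ _ _ _ (hN₀ N hN).1 _ _⟩, ?_, ?_⟩
  · have h := (tendsto_drift κ₁ κ₂ κ₃ κ₄ κ₅ κ₆ κ₇ v₁ (p := fun _ => P) (s := fun _ => κ₃)
      (p₀ := P) (p₁ := 0) (s₀ := κ₃) (s₁ := 0) hC (fun _ => by ring) (fun _ => by ring))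
    convert h.add_const P using 2 with N
    · ring
    · rw [neg_mul, hlam]; ring
  · have h := (tendsto_drift κ₁ κ₂ κ₃ κ₄ κ₅ κ₆ κ₇ v₁ (p := fun N => -(N * κ₆) - κ₈ * v₃)
      (s := fun N => -(N * κ₆)) (p₀ := -(κ₈ * v₃)) (p₁ := -κ₆) (s₀ := 0) (s₁ := -κ₆) hC
      (fun _ => by ring) (fun _ => by ring))
    convert h.sub_const (κ₈ * v₃) using 2 with N
    · ring
    · rw [hlam₂]; ring

/-- Averaging computation for the main example of Cappelletti and Wiuf:
for all sufficiently large `N`, the two linear systems (i)–(ii) in `(a₁,a₂)`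
and (iii)–(iv) in `(a₃,a₄)` have unique solutions `(a₁ᴺ,a₂ᴺ)` and `(a₃ᴺ,a₄ᴺ)`,
and `N(κ₆a₁ᴺ + κ₇a₂ᴺ) → −(λ₁+λ₂)v₁ + κ₈v₃`,
`N(κ₆(1+a₃ᴺ) + κ₇a₄ᴺ) → λ₂v₁ − κ₈v₃` as `N → ∞`. -/
theorem cappelletti_wiuf_averaging
    (κ₁ κ₂ κ₃ κ₄ κ₅ κ₆ κ₇ κ₈ : ℝ)
    (h₁ : 0 < κ₁) (h₂ : 0 < κ₂) (h₃ : 0 < κ₃) (h₄ : 0 < κ₄) (h₅ : 0 < κ₅)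
    (h₆ : 0 < κ₆) (h₇ : 0 < κ₇) (h₈ : 0 < κ₈)
    (v₁ v₃ : ℝ) (hv₁ : 0 ≤ v₁) (hv₃ : 0 ≤ v₃)
    (lam₁ lam₂ : ℝ)
    (hlam₁ : lam₁ = κ₁ * (κ₄ * (κ₆ + κ₇)) / (κ₄ * (κ₆ + κ₇) + κ₅ * κ₆)
        + κ₂ * (κ₄ * κ₇) / (κ₄ * (κ₆ + κ₇) + κ₅ * κ₆))
    (hlam₂ : lam₂ = κ₁ * (κ₅ * κ₆) / (κ₄ * (κ₆ + κ₇) + κ₅ * κ₆)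
        + κ₂ * ((κ₄ + κ₅) * κ₆) / (κ₄ * (κ₆ + κ₇) + κ₅ * κ₆)) :
    ∃ (a₁ a₂ a₃ a₄ : ℕ → ℝ) (N₀ : ℕ), 1 ≤ N₀ ∧
      (∀ N : ℕ, N₀ ≤ N →
        (∀ b₁ b₂ : ℝ,
          (-(v₁ * (κ₁ + κ₂)) + κ₈ * v₃ + κ₁ * v₁ * (b₂ - b₁) - κ₂ * v₁ * b₁
              - (N : ℝ) * κ₆ * b₁ - (N : ℝ) * κ₇ * b₂ = 0 ∧
           κ₃ + (κ₃ + (N : ℝ) ^ 2 * κ₄) * (b₁ - b₂) - (N : ℝ) ^ 2 * κ₅ * b₂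
              - (N : ℝ) * κ₆ * b₁ - (N : ℝ) * κ₇ * b₂ = 0)
          ↔ (b₁ = a₁ N ∧ b₂ = a₂ N)) ∧
        (∀ b₃ b₄ : ℝ,
          (-((N : ℝ) * κ₆) - κ₈ * v₃ + κ₁ * v₁ * (b₄ - b₃) - κ₂ * v₁ * b₃
              - (N : ℝ) * κ₆ * b₃ - (N : ℝ) * κ₇ * b₄ = 0 ∧
           -((N : ℝ) * κ₆) + (κ₃ + (N : ℝ) ^ 2 * κ₄) * (b₃ - b₄)
              - (N : ℝ) ^ 2 * κ₅ * b₄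
              - (N : ℝ) * κ₆ * b₃ - (N : ℝ) * κ₇ * b₄ = 0)
          ↔ (b₃ = a₃ N ∧ b₄ = a₄ N))) ∧
      Tendsto (fun N : ℕ => (N : ℝ) * (κ₆ * a₁ N + κ₇ * a₂ N)) atTop
        (nhds (-(lam₁ + lam₂) * v₁ + κ₈ * v₃)) ∧
      Tendsto (fun N : ℕ => (N : ℝ) * (κ₆ * (1 + a₃ N) + κ₇ * a₄ N)) atTop
        (nhds (lam₂ * v₁ - κ₈ * v₃)) :=
  cappelletti_wiuf_averaging_general κ₁ κ₂ κ₃ κ₄ κ₅ κ₆ κ₇ κ₈ h₄ h₅ h₆ h₇ v₁ v₃ lam₁ lam₂ hlam₁ hlam₂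
end
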